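/- (Klau) For every fixed U : V_S → ℝ, the linear program NALLP has an integer optimal solution computable by maximum weight bipartite matching: the supremum of the NALLP objective over all NALLP-feasible pairs (x, y) with in addition y ≥ 0 equals the maximum over all matchings M ⊆ E_L of Σ_{e ∈ M} w'_e, where w'_e = α w_e + Σ_{e' : (e,e') ∈ V_S} max(0, β/2 + U_{(e,e')} − U_{(e',e)}) (here α ≥ 0, β ≥ 0 and w ≥ 0, so w' ≥ 0). -/

import Mathlib

open Matrix Classical

noncomputable section

/-- Two edges `e = (i,i')` and `e' = (j,j')` of the bipartite graph `L`
form a square if `(i,j) ∈ E_A` and `(i',j') ∈ E_B`. -/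
def Square {VA VB : Type*} (A : SimpleGraph VA) (B : SimpleGraph VB)
    (e e' : VA × VB) : Prop :=
  A.Adj e.1 e'.1 ∧ B.Adj e.2 e'.2

/-- The symmetric 0-1 matrix `S` indexed by the edges of `L`, with
`S_{e,e'} = 1` iff `e` and `e'` form a square. -/
def sqMatrix {VA VB : Type*} (A : SimpleGraph VA) (B : SimpleGraph VB)
    (EL : Finset (VA × VB)) : Matrix ↥EL ↥EL ℝ :=
  fun e e' => if Square A B e.1 e'.1 then 1 else 0

/-- `x` indexed by `E_L` satisfies the matching constraints: at every vertex
of `L`, the sum of `x_e` over incident edges is at most `1`. -/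
def MatchCon {VA VB : Type*} (EL : Finset (VA × VB)) (x : ↥EL → ℝ) : Prop :=
  (∀ i : VA, ∑ e : ↥EL, (if (e : VA × VB).1 = i then x e else 0) ≤ 1) ∧
  (∀ i' : VB, ∑ e : ↥EL, (if (e : VA × VB).2 = i' then x e else 0) ≤ 1)

/-- a 0/1-valued vector -/
def IsBinary {ι : Type*} (x : ι → ℝ) : Prop := ∀ i, x i = 0 ∨ x i = 1

/-- `V_S`: the set of ordered pairs of edges of `E_L` that form a square. -/
abbrev VS {VA VB : Type*} (A : SimpleGraph VA) (B : SimpleGraph VB)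
    (EL : Finset (VA × VB)) : Type _ :=
  {p : ↥EL × ↥EL // Square A B p.1.1 p.2.1}

instance {VA VB : Type*} (A : SimpleGraph VA) (B : SimpleGraph VB)
    (EL : Finset (VA × VB)) : Fintype (VS A B EL) :=
  Fintype.ofFinite _

/-- the map `(e,e') ↦ (e',e)` on `V_S` (well defined by symmetry of `V_S`). -/
def VSswap {VA VB : Type*} {A : SimpleGraph VA} {B : SimpleGraph VB}
    {EL : Finset (VA × VB)} (s : VS A B EL) : VS A B EL :=
  ⟨(s.1.2, s.1.1), s.2.1.symm, s.2.2.symm⟩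

/-- The network alignment objective `f(x) = α wᵀ x + (β/2) xᵀ S x`. -/
def netObj {VA VB : Type*} (A : SimpleGraph VA) (B : SimpleGraph VB)
    (EL : Finset (VA × VB)) (α β : ℝ) (w : ↥EL → ℝ) (x : ↥EL → ℝ) : ℝ :=
  α * (w ⬝ᵥ x) + β / 2 * (x ⬝ᵥ (sqMatrix A B EL) *ᵥ x)

/-- The probability distribution `p(x_E, x_S)` on the factor graph. -/
def pdist {VA VB : Type*} [Fintype VA] [Fintype VB]
    (A : SimpleGraph VA) (B : SimpleGraph VB) (EL : Finset (VA × VB))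
    (α β : ℝ) (w : ↥EL → ℝ) (xE : ↥EL → ℝ) (xS : VS A B EL → ℝ) : ℝ :=
  Real.exp (α * (w ⬝ᵥ xE) + β / 2 * ∑ s : VS A B EL, xS s) *
    (∏ i : VA,
      if (∑ e : ↥EL, if (e : VA × VB).1 = i then xE e else 0) ≤ 1 then (1 : ℝ) else 0) *
    (∏ i' : VB,
      if (∑ e : ↥EL, if (e : VA × VB).2 = i' then xE e else 0) ≤ 1 then (1 : ℝ) else 0) *
    (∏ s : VS A B EL, if xS s = xE s.1.1 * xE s.1.2 then (1 : ℝ) else 0)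

/-- NALLP feasibility: `x ∈ [0,1]^{E_L}`, `y ∈ [0,1]^{V_S}`, `x` satisfies the
matching constraints, and `y_{(e,e')} ≤ x_e` (no symmetry constraint). -/
def NALLPFeasible {VA VB : Type*} (A : SimpleGraph VA) (B : SimpleGraph VB)
    (EL : Finset (VA × VB)) (x : ↥EL → ℝ) (y : VS A B EL → ℝ) : Prop :=
  (∀ e, 0 ≤ x e ∧ x e ≤ 1) ∧ (∀ s, 0 ≤ y s ∧ y s ≤ 1) ∧ MatchCon EL x ∧
  (∀ s : VS A B EL, y s ≤ x s.1.1)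

/-- the NALLP objective with Lagrange multipliers `U`:
`α wᵀ x + (β/2) Σ_{V_S} y + Σ_{(e,e') ∈ V_S} U_{(e,e')} (y_{(e,e')} − y_{(e',e)})` -/
def nallpObj {VA VB : Type*} (A : SimpleGraph VA) (B : SimpleGraph VB)
    (EL : Finset (VA × VB)) (U : VS A B EL → ℝ) (α β : ℝ) (w : ↥EL → ℝ)
    (x : ↥EL → ℝ) (y : VS A B EL → ℝ) : ℝ :=
  α * (w ⬝ᵥ x) + β / 2 * ∑ s : VS A B EL, y s +
    ∑ s : VS A B EL, U s * (y s - y (VSswap s))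

/-- `M ⊆ E_L` is a matching: no two distinct edges of `M` share an endpoint. -/
def IsMatchingSet {VA VB : Type*} (EL : Finset (VA × VB)) (M : Finset ↥EL) : Prop :=
  ∀ e ∈ M, ∀ e' ∈ M, e ≠ e' →
    (e : VA × VB).1 ≠ (e' : VA × VB).1 ∧ (e : VA × VB).2 ≠ (e' : VA × VB).2

/-!
For fixed `U`, pairing each `y_{(e,e')}` with `y_{(e',e)}` rewrites the objective as
`α wᵀx + Σ_{s ∈ V_S} (β/2 + U_s − U_{s̄}) y_s`, where `s̄` is `s` reversed. Since `y_{(e,e')}` is constrained only by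
`0 ≤ y_{(e,e')} ≤ x_e`, the optimal `y` is `x_e` on squares of nonnegative coefficient and `0`
elsewhere, which leaves the linear function `Σ_e w'_e x_e` of `x` over the bipartite matching
polytope. That polytope has the matchings as vertices: padding a fractional matching `X` to the
doubly stochastic matrix `[[I − diag(X𝟙), X], [Xᵀ, I − diag(Xᵀ𝟙)]]` and applying Birkhoff's
theorem writes `x` as a convex combination of matchings.
-/

open Finset

namespace Matrix

variable {ι κ : Type*} [Fintype ι] [Fintype κ] [DecidableEq ι] [DecidableEq κ]

theorem fromBlocks_mem_doublyStochastic (X : Matrix ι κ ℝ) (hX : ∀ i j, 0 ≤ X i j)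
    (hrow : ∀ i, ∑ j, X i j ≤ 1) (hcol : ∀ j, ∑ i, X i j ≤ 1) :
    fromBlocks (diagonal fun i => 1 - ∑ j, X i j) X Xᵀ (diagonal fun j => 1 - ∑ i, X i j)
      ∈ doublyStochastic ℝ (ι ⊕ κ) := by
  refine mem_doublyStochastic_iff_sum.2 ⟨?_, ?_, ?_⟩
  · rintro (i | j) (i' | j') <;>
      simp [diagonal_apply, hX, apply_ite, sub_nonneg, hrow, hcol]
  · rintro (i | j) <;> simp [Fintype.sum_sum_type, diagonal_apply]
  · rintro (i | j) <;> simp [Fintype.sum_sum_type, diagonal_apply]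

end Matrix

section FractionalMatching

theorem injOn_of_perm_inl_eq_inr {E ι κ : Type*} (f : E → ι) (g : E → κ)
    (hfg : Function.Injective fun e => (f e, g e)) (σ : Equiv.Perm (ι ⊕ κ)) :
    Set.InjOn f {e | σ (.inl (f e)) = .inr (g e)} ∧
      Set.InjOn g {e | σ (.inl (f e)) = .inr (g e)} := by
  constructor
  · intro e (he : σ _ = _) e' (he' : σ _ = _) h
    refine hfg (Prod.ext h (Sum.inr_injective (α := ι) ?_))
    rw [← he, ← he', h]
  · intro e (he : σ _ = _) e' (he' : σ _ = _) h
    have hf : f e = f e' := Sum.inl_injective <| σ.injective <| by rw [he, he', h]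
    exact hfg (Prod.ext hf h)

variable {E ι κ : Type*} [Fintype E] [Fintype ι] [Fintype κ] [DecidableEq ι] [DecidableEq κ]
  (f : E → ι) (g : E → κ) (hfg : Function.Injective fun e => (f e, g e))
  {x : E → ℝ} (hx : ∀ e, 0 ≤ x e)
  (hf : ∀ i, ∑ e with f e = i, x e ≤ 1) (hg : ∀ j, ∑ e with g e = j, x e ≤ 1)
include hfg hx hf hg

theorem exists_eq_sum_perm_of_fractionalMatching :
    ∃ t : Equiv.Perm (ι ⊕ κ) → ℝ, (∀ σ, 0 ≤ t σ) ∧ ∑ σ, t σ = 1 ∧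
      ∀ e, x e = ∑ σ, t σ * if σ (.inl (f e)) = .inr (g e) then 1 else 0 := by
  set X : Matrix ι κ ℝ := Matrix.of fun i j => ∑ e with f e = i ∧ g e = j, x e
  have hrow : ∀ i, ∑ j, X i j = ∑ e with f e = i, x e := fun i => by
    simp only [X, Matrix.of_apply, sum_filter]
    rw [sum_comm]
    refine sum_congr rfl fun e _ => ?_
    by_cases h : f e = i <;> simp [h]
  have hcol : ∀ j, ∑ i, X i j = ∑ e with g e = j, x e := fun j => by
    simp only [X, Matrix.of_apply, sum_filter]
    rw [sum_comm]
    refine sum_congr rfl fun e _ => ?_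
    by_cases h : g e = j <;> simp [h]
  have hentry : ∀ e, X (f e) (g e) = x e := fun e => by
    simp only [X, Matrix.of_apply]
    rw [sum_eq_single_of_mem e (by simp)]
    intro e' he' hne
    exact absurd (hfg (Prod.ext (mem_filter.1 he').2.1 (mem_filter.1 he').2.2)) hne
  obtain ⟨t, ht0, ht1, htX⟩ := exists_eq_sum_perm_of_mem_doublyStochastic <|
    Matrix.fromBlocks_mem_doublyStochastic X (fun i j => sum_nonneg fun e _ => hx e)
      (fun i => (hrow i).trans_le (hf i)) (fun j => (hcol j).trans_le (hg j))
  refine ⟨t, ht0, ht1, fun e => ?_⟩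
  have hX := congrFun (congrFun htX (.inl (f e))) (.inr (g e))
  simp only [Matrix.fromBlocks_apply₁₂, hentry, Matrix.sum_apply, Matrix.smul_apply,
    smul_eq_mul] at hX
  rw [← hX]
  simp [Equiv.Perm.permMatrix, PEquiv.toMatrix_apply, eq_comm]

theorem sum_mul_le_of_fractionalMatching (c : E → ℝ) {v : ℝ}
    (hv : ∀ M : Finset E, Set.InjOn f M → Set.InjOn g M → ∑ e ∈ M, c e ≤ v) :
    ∑ e, c e * x e ≤ v := by
  obtain ⟨t, ht0, ht1, hxt⟩ := exists_eq_sum_perm_of_fractionalMatching f g hfg hx hf hg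
  calc ∑ e, c e * x e
      = ∑ σ, t σ * ∑ e with σ (.inl (f e)) = .inr (g e), c e := by
        simp only [hxt, mul_sum, sum_filter]
        rw [sum_comm]
        refine sum_congr rfl fun σ _ => sum_congr rfl fun e _ => ?_
        split_ifs <;> ring
    _ ≤ ∑ σ, t σ * v := by
        gcongr with σ
        · exact ht0 σ
        · obtain ⟨hinjf, hinjg⟩ := injOn_of_perm_inl_eq_inr f g hfg σ
          exact hv _ (by simpa using hinjf) (by simpa using hinjg)
    _ = v := by rw [← sum_mul, ht1, one_mul]

end FractionalMatching

section NALLP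

variable {VA VB : Type*} {A : SimpleGraph VA} {B : SimpleGraph VB} {EL : Finset (VA × VB)}

theorem VSswap_involutive : Function.Involutive (VSswap (A := A) (B := B) (EL := EL)) :=
  fun _ => rfl

theorem sum_comp_VSswap (F : VS A B EL → ℝ) : ∑ s, F (VSswap s) = ∑ s, F s :=
  Equiv.sum_comp (VSswap_involutive.toPerm _) F

theorem nallpObj_eq (U : VS A B EL → ℝ) (α β : ℝ) (w x : ↥EL → ℝ) (y : VS A B EL → ℝ) :
    nallpObj A B EL U α β w x y
      = α * (w ⬝ᵥ x) + ∑ s, (β / 2 + U s - U (VSswap s)) * y s := by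
  have hswap : ∑ s, U s * y (VSswap s) = ∑ s, U (VSswap s) * y s :=
    sum_comp_VSswap fun s => U (VSswap s) * y s
  simp only [nallpObj, mul_sub, sum_sub_distrib, hswap, mul_sum, sub_mul, add_mul,
    sum_add_distrib]
  ring

variable (A B EL) in
def reducedWeight (U : VS A B EL → ℝ) (α β : ℝ) (w : ↥EL → ℝ) (e : ↥EL) : ℝ :=
  α * w e + ∑ s : VS A B EL, if s.1.1 = e then max 0 (β / 2 + U s - U (VSswap s)) else 0

theorem sum_reducedWeight_mul (U : VS A B EL → ℝ) (α β : ℝ) (w x : ↥EL → ℝ) :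
    ∑ e, reducedWeight A B EL U α β w e * x e
      = α * (w ⬝ᵥ x) + ∑ s, max 0 (β / 2 + U s - U (VSswap s)) * x s.1.1 := by
  simp only [reducedWeight, add_mul, sum_add_distrib, dotProduct, mul_sum, sum_mul, ite_mul,
    zero_mul, mul_assoc]
  rw [sum_comm (s := univ (α := ↥EL))]
  simp

theorem nallpObj_le_sum_reducedWeight_mul {U : VS A B EL → ℝ} {α β : ℝ} {w x : ↥EL → ℝ}
    {y : VS A B EL → ℝ} (hy : ∀ s, 0 ≤ y s) (hyx : ∀ s, y s ≤ x s.1.1) :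
    nallpObj A B EL U α β w x y ≤ ∑ e, reducedWeight A B EL U α β w e * x e := by
  rw [nallpObj_eq, sum_reducedWeight_mul]
  refine add_le_add le_rfl (sum_le_sum fun s _ => ?_)
  calc _ ≤ max 0 (β / 2 + U s - U (VSswap s)) * y s :=
        mul_le_mul_of_nonneg_right (le_max_right _ _) (hy s)
    _ ≤ _ := mul_le_mul_of_nonneg_left (hyx s) (le_max_left _ _)

theorem nallpObj_ite_eq_sum_reducedWeight_mul (U : VS A B EL → ℝ) (α β : ℝ) (w x : ↥EL → ℝ) :
    nallpObj A B EL U α β w x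
        (fun s => if 0 ≤ β / 2 + U s - U (VSswap s) then x s.1.1 else 0)
      = ∑ e, reducedWeight A B EL U α β w e * x e := by
  rw [nallpObj_eq, sum_reducedWeight_mul]
  congr 1
  refine sum_congr rfl fun s _ => ?_
  split_ifs with h
  · rw [max_eq_right h]
  · rw [max_eq_left (not_le.1 h).le, zero_mul, mul_zero]

theorem isMatchingSet_iff_injOn {M : Finset ↥EL} :
    IsMatchingSet EL M ↔
      Set.InjOn (fun e : ↥EL => e.1.1) M ∧ Set.InjOn (fun e : ↥EL => e.1.2) M := by
  constructor
  · intro hM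
    constructor
    · intro e he e' he' h
      by_contra hne
      exact (hM e he e' he' hne).1 h
    · intro e he e' he' h
      by_contra hne
      exact (hM e he e' he' hne).2 h
  · rintro ⟨h₁, h₂⟩ e he e' he' hne
    exact ⟨fun h => hne (h₁ he he' h), fun h => hne (h₂ he he' h)⟩

theorem sum_indicator_le_one_of_injOn {E ι : Type*} [Fintype E] [DecidableEq E] [DecidableEq ι]
    {f : E → ι} {M : Finset E} (hM : Set.InjOn f M) (i : ι) :
    ∑ e, (if f e = i then (if e ∈ M then 1 else 0) else 0 : ℝ) ≤ 1 := by
  have hcard : #{e | e ∈ M ∧ f e = i} ≤ 1 :=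
    card_le_one.2 fun a ha b hb => by
      simp only [mem_filter, mem_univ, true_and] at ha hb
      exact hM ha.1 hb.1 (ha.2.trans hb.2.symm)
  calc ∑ e, (if f e = i then (if e ∈ M then 1 else 0) else 0 : ℝ)
      = ∑ e, if e ∈ M ∧ f e = i then 1 else 0 :=
        sum_congr rfl fun e _ => by by_cases h : f e = i <;> by_cases h' : e ∈ M <;> simp [h, h']
    _ = #{e | e ∈ M ∧ f e = i} := by rw [← sum_boole]
    _ ≤ 1 := by exact_mod_cast hcard

theorem matchCon_indicator {M : Finset ↥EL} (hM : IsMatchingSet EL M) :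
    MatchCon EL fun e => if e ∈ M then 1 else 0 :=
  ⟨sum_indicator_le_one_of_injOn (isMatchingSet_iff_injOn.1 hM).1,
    sum_indicator_le_one_of_injOn (isMatchingSet_iff_injOn.1 hM).2⟩

theorem sum_mul_le_of_matchCon {x : ↥EL → ℝ} (hx : ∀ e, 0 ≤ x e) (hm : MatchCon EL x)
    (c : ↥EL → ℝ) {v : ℝ} (hv : ∀ M, IsMatchingSet EL M → ∑ e ∈ M, c e ≤ v) :
    ∑ e, c e * x e ≤ v := by
  let f : ↥EL → ↥(EL.image Prod.fst) := fun e => ⟨e.1.1, mem_image_of_mem _ e.2⟩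
  let g : ↥EL → ↥(EL.image Prod.snd) := fun e => ⟨e.1.2, mem_image_of_mem _ e.2⟩
  refine sum_mul_le_of_fractionalMatching f g ?_ hx ?_ ?_ c fun M hf hg => hv M ?_
  · intro e e' h
    simp only [f, g, Prod.mk.injEq, Subtype.mk.injEq] at h
    exact Subtype.ext (Prod.ext h.1 h.2)
  · intro i
    simpa [f, sum_filter, Subtype.ext_iff] using hm.1 i
  · intro j
    simpa [g, sum_filter, Subtype.ext_iff] using hm.2 j
  · exact isMatchingSet_iff_injOn.2
      ⟨fun e he e' he' h => hf he he' (Subtype.ext h), fun e he e' he' h => hg he he' (Subtype.ext h)⟩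

theorem exists_nallpFeasible_nallpObj_eq_sum {M : Finset ↥EL} (hM : IsMatchingSet EL M)
    (U : VS A B EL → ℝ) (α β : ℝ) (w : ↥EL → ℝ) :
    ∃ x y, NALLPFeasible A B EL x y ∧
      nallpObj A B EL U α β w x y = ∑ e ∈ M, reducedWeight A B EL U α β w e := by
  set x : ↥EL → ℝ := fun e => if e ∈ M then 1 else 0
  have hx : ∀ e, 0 ≤ x e ∧ x e ≤ 1 := fun e => by by_cases h : e ∈ M <;> simp [x, h]
  have hy : ∀ s : VS A B EL,
      0 ≤ (if 0 ≤ β / 2 + U s - U (VSswap s) then x s.1.1 else 0) ∧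
        (if 0 ≤ β / 2 + U s - U (VSswap s) then x s.1.1 else 0) ≤ x s.1.1 := fun s => by
    split_ifs
    · exact ⟨(hx _).1, le_rfl⟩
    · exact ⟨le_rfl, (hx _).1⟩
  refine ⟨x, _, ⟨hx, fun s => ⟨(hy s).1, (hy s).2.trans (hx _).2⟩, matchCon_indicator hM,
    fun s => (hy s).2⟩, ?_⟩
  rw [nallpObj_ite_eq_sum_reducedWeight_mul]
  simp only [x, mul_ite, mul_one, mul_zero]
  rw [sum_ite_mem, univ_inter]

theorem nallpObj_le_of_nallpFeasible {U : VS A B EL → ℝ} {α β : ℝ} {w x : ↥EL → ℝ}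
    {y : VS A B EL → ℝ} (hxy : NALLPFeasible A B EL x y) {v : ℝ}
    (hv : ∀ M, IsMatchingSet EL M → ∑ e ∈ M, reducedWeight A B EL U α β w e ≤ v) :
    nallpObj A B EL U α β w x y ≤ v :=
  (nallpObj_le_sum_reducedWeight_mul (fun s => (hxy.2.1 s).1) hxy.2.2.2).trans
    (sum_mul_le_of_matchCon (fun e => (hxy.1 e).1) hxy.2.2.1 _ hv)

end NALLP

theorem stmt9_general {VA VB : Type*}
    (A : SimpleGraph VA) (B : SimpleGraph VB) (EL : Finset (VA × VB))
    (α β : ℝ)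
    (w : ↥EL → ℝ)
    (U : VS A B EL → ℝ) :
    ∃ v : ℝ,
      IsLUB {v' : ℝ | ∃ (x : ↥EL → ℝ) (y : VS A B EL → ℝ),
          NALLPFeasible A B EL x y ∧ (∀ s, 0 ≤ y s) ∧
          v' = nallpObj A B EL U α β w x y} v ∧
      IsGreatest {v' : ℝ | ∃ M : Finset ↥EL, IsMatchingSet EL M ∧
          v' = ∑ e ∈ M, (α * w e +
            ∑ s : VS A B EL,
              if s.1.1 = e then max 0 (β / 2 + U s - U (VSswap s)) else 0)} v := by
  obtain ⟨M₀, hM₀, hmax⟩ := (univ.filter (IsMatchingSet EL)).exists_max_image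
    (fun M => ∑ e ∈ M, reducedWeight A B EL U α β w e) ⟨∅, by simp [IsMatchingSet]⟩
  simp only [mem_filter, mem_univ, true_and] at hM₀ hmax
  obtain ⟨x₀, y₀, hfeas, hobj⟩ := exists_nallpFeasible_nallpObj_eq_sum hM₀ U α β w
  refine ⟨_, IsGreatest.isLUB ⟨⟨x₀, y₀, hfeas, fun s => (hfeas.2.1 s).1, hobj.symm⟩, ?_⟩,
    ⟨M₀, hM₀, rfl⟩, ?_⟩
  · rintro _ ⟨x, y, hxy, -, rfl⟩
    exact nallpObj_le_of_nallpFeasible hxy hmax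
  · rintro _ ⟨M, hM, rfl⟩
    exact hmax M hM

/-- Klau: for every fixed `U`, the linear program NALLP has an
integer optimal solution computable by maximum weight bipartite matching: the
supremum of the NALLP objective over NALLP-feasible pairs (with `y ≥ 0`) equals
the maximum over all matchings `M ⊆ E_L` of `Σ_{e ∈ M} w'_e`, where
`w'_e = α w_e + Σ_{e' : (e,e') ∈ V_S} max(0, β/2 + U_{(e,e')} − U_{(e',e)})`. -/
theorem stmt9 {VA VB : Type*}
    (A : SimpleGraph VA) (B : SimpleGraph VB) (EL : Finset (VA × VB))
    (α β : ℝ) (hα : 0 ≤ α) (hβ : 0 ≤ β)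
    (w : ↥EL → ℝ) (hw : ∀ e, 0 ≤ w e)
    (U : VS A B EL → ℝ) :
    ∃ v : ℝ,
      IsLUB {v' : ℝ | ∃ (x : ↥EL → ℝ) (y : VS A B EL → ℝ),
          NALLPFeasible A B EL x y ∧ (∀ s, 0 ≤ y s) ∧
          v' = nallpObj A B EL U α β w x y} v ∧
      IsGreatest {v' : ℝ | ∃ M : Finset ↥EL, IsMatchingSet EL M ∧
          v' = ∑ e ∈ M, (α * w e +
            ∑ s : VS A B EL,
              if s.1.1 = e then max 0 (β / 2 + U s - U (VSswap s)) else 0)} v :=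
  stmt9_general A B EL α β w U
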